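/- arXiv:1901.09363 — 5 statements merged into one kernel-verified Lean document; each statement's English description precedes it below -/
import Mathlib

section
/- Let k ∈ ℕ and let R = (V, ≤, ρ_1, …, ρ_k) be an ordered binary structure of type k. Then R has a finite monomorphic decomposition if and only if for every i with 1 ≤ i ≤ k the ordered binary structure R_i = (V, ≤, ρ_i) has a finite monomorphic decomposition. -/
/-- An ordered binary structure: a domain `V`, a linear order `le` on `V`,
and a family of binary relations `rel i` on `V` indexed by `ι`. -/
structure OrdBin (ι : Type) where
  V : Type
  le : V → V → Prop
  linear : IsLinearOrder V le
  rel : ι → V → V → Prop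

namespace OrdBin

variable {ι : Type}

/-- The substructure induced on a subset `A` of the domain. -/
def restrict (R : OrdBin ι) (A : Set R.V) : OrdBin ι where
  V := A
  le := fun a b => R.le a.1 b.1
  linear := by
    haveI := R.linear
    exact
      { refl := fun a => refl_of R.le a.1
        trans := fun a b c hab hbc => trans_of R.le hab hbc
        antisymm := fun a b hab hba => Subtype.ext (antisymm_of R.le hab hba)
        total := fun a b => total_of R.le a.1 b.1 }
  rel := fun i a b => R.rel i a.1 b.1

/-- Isomorphism of ordered binary structures: a bijection of the domains preserving
the linear order and each binary relation. -/
def Iso (R S : OrdBin ι) : Prop :=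
  ∃ e : R.V ≃ S.V, (∀ x y : R.V, R.le x y ↔ S.le (e x) (e y)) ∧
    ∀ (i : ι) (x y : R.V), R.rel i x y ↔ S.rel i (e x) (e y)

/-- `R` embeds in `S` if `R` is isomorphic to an induced substructure of `S`. -/
def Embeds (R S : OrdBin ι) : Prop :=
  ∃ A : Set S.V, Iso R (S.restrict A)

/-- `B` is a monomorphic part of `R`: any two finite subsets of the domain of the
same cardinality which agree outside `B` induce isomorphic substructures. -/
def MonoPart (R : OrdBin ι) (B : Set R.V) : Prop :=
  ∀ A A' : Set R.V, A.Finite → A'.Finite → A.ncard = A'.ncard →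
    A \ B = A' \ B → Iso (R.restrict A) (R.restrict A')

/-- A monomorphic decomposition of `R`: a partition of the domain into monomorphic parts. -/
def MonoDecomp (R : OrdBin ι) (P : Set (Set R.V)) : Prop :=
  Setoid.IsPartition P ∧ ∀ B ∈ P, R.MonoPart B

/-- `R` has a monomorphic decomposition with finitely many blocks. -/
def HasFiniteMonoDecomp (R : OrdBin ι) : Prop :=
  ∃ P : Set (Set R.V), R.MonoDecomp P ∧ P.Finite

/-- A hereditary class of finite ordered binary structures. -/
def Hereditary (C : Set (OrdBin ι)) : Prop :=
  (∀ R ∈ C, Finite R.V) ∧ ∀ R ∈ C, ∀ S : OrdBin ι, Embeds S R → S ∈ C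

/-- `x` and `y` are `F`-equivalent: the substructures induced on `{x} ∪ F` and
`{y} ∪ F` are isomorphic. -/
def EqF (R : OrdBin ι) (F : Set R.V) (x y : R.V) : Prop :=
  Iso (R.restrict (insert x F)) (R.restrict (insert y F))

/-- `x ≃_{m,R} y`: `x` and `y` are `F`-equivalent for every `m`-element subset `F`
of `V \ {x, y}`. -/
def EqM (R : OrdBin ι) (m : ℕ) (x y : R.V) : Prop :=
  ∀ F : Set R.V, F.Finite → F.ncard = m → x ∉ F → y ∉ F → EqF R F x y

/-- `x ≃_{≤m,R} y`: `x ≃_{m',R} y` for every `m' ≤ m`. -/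
def EqLe (R : OrdBin ι) (m : ℕ) (x y : R.V) : Prop :=
  ∀ m' ≤ m, EqM R m' x y

/-- `x ≃_R y`: `x ≃_{m,R} y` for every `m`. -/
def EqR (R : OrdBin ι) (x y : R.V) : Prop :=
  ∀ m : ℕ, EqM R m x y

/-- `d(x,y) = d(x',y')`: the pair of truth values `(ρ_i(x,y), ρ_i(y,x))` agrees with
`(ρ_i(x',y'), ρ_i(y',x'))` for every `i`. -/
def dEq (R : OrdBin ι) (x y x' y' : R.V) : Prop :=
  ∀ i : ι, (R.rel i x y ↔ R.rel i x' y') ∧ (R.rel i y x ↔ R.rel i y' x')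

/-- `A` is an interval of the linear order `(V, le)`. -/
def IntervalLe (R : OrdBin ι) (A : Set R.V) : Prop :=
  ∀ u ∈ A, ∀ w ∈ A, ∀ z : R.V, R.le u z → R.le z w → z ∈ A

/-- `A` is an interval of `R`: an interval of the order such that all elements of `A`
have the same relations to each element outside `A`. -/
def IntervalR (R : OrdBin ι) (A : Set R.V) : Prop :=
  IntervalLe R A ∧ ∀ u ∈ A, ∀ u' ∈ A, ∀ w ∉ A, dEq R u w u' w

/-- `R` is `n`-monomorphic: the substructures induced on any two `n`-element subsets
of the domain are isomorphic. -/
def NMono (R : OrdBin ι) (n : ℕ) : Prop :=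
  ∀ A A' : Set R.V, A.Finite → A'.Finite → A.ncard = n → A'.ncard = n →
    Iso (R.restrict A) (R.restrict A')

/-- `R` is `(≤n)`-monomorphic. -/
def LeMono (R : OrdBin ι) (n : ℕ) : Prop :=
  ∀ m ≤ n, NMono R m

/-- `R` is monomorphic. -/
def Mono (R : OrdBin ι) : Prop :=
  ∀ n : ℕ, NMono R n

/-- The profile of `R`: the number of induced substructures on `n`-element subsets
of the domain, counted up to isomorphism. -/
noncomputable def profileR (R : OrdBin ι) (n : ℕ) : ℕ :=
  Nat.card (Quot fun (A B : {A : Set R.V // A.Finite ∧ A.ncard = n}) =>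
    Iso (R.restrict A.1) (R.restrict B.1))

/-- The profile of a class `C`: the number of members of `C` with exactly `n`
elements, counted up to isomorphism. -/
noncomputable def profileC (C : Set (OrdBin ι)) (n : ℕ) : ℕ :=
  Nat.card (Quot fun (R S : {R : OrdBin ι // R ∈ C ∧ Nat.card R.V = n}) =>
    Iso R.1 S.1)

end OrdBin

/-- The Fibonacci sequence with `F 0 = F 1 = 1`. -/
def fib1 : ℕ → ℕ
  | 0 => 1
  | 1 => 1
  | n + 2 => fib1 (n + 1) + fib1 n

/-!
An isomorphism of ordered structures is in particular an isomorphism of the underlying chains,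
and between two finite chains there is at most one. So two finite substructures of `R` of the
same size are isomorphic iff the corresponding substructures of every component `R_i` are: the
isomorphisms of the components all equal the unique order isomorphism. Hence a set is a
monomorphic part of `R` iff it is one of every `R_i`, and the common refinement of finite
monomorphic decompositions of the finitely many components is one of `R`.
-/

theorem Setoid.IsPartition.exists_finite_common_refinement {α ι : Type*} [Finite ι]
    {P : ι → Set (Set α)} (hP : ∀ i, IsPartition (P i)) (hfin : ∀ i, (P i).Finite) :
    ∃ Q : Set (Set α), IsPartition Q ∧ Q.Finite ∧ ∀ B ∈ Q, ∀ i, ∃ C ∈ P i, B ⊆ C := by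
  choose blk hblk using fun i a => ((hP i).2 a).exists
  have := fun i => (hfin i).to_subtype
  let f : α → ∀ i, P i := fun a i => ⟨blk i a, (hblk i a).1⟩
  refine ⟨(Setoid.ker f).classes, isPartition_classes _, finite_classes_ker f, ?_⟩
  rintro _ ⟨y, rfl⟩ i
  refine ⟨blk i y, (hblk i y).1, fun x hx => ?_⟩
  have hxy : blk i x = blk i y := congrArg Subtype.val (congrFun hx i)
  exact hxy ▸ (hblk i x).2

namespace OrdBin

variable {ι : Type}

def comp (R : OrdBin ι) (i : ι) : OrdBin (Fin 1) :=
  ⟨R.V, R.le, R.linear, fun _ => R.rel i⟩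

noncomputable abbrev toLinearOrder (R : OrdBin ι) : LinearOrder R.V :=
  have := R.linear
  { le := R.le
    le_refl := refl_of R.le
    le_trans := fun _ _ _ => trans_of R.le
    le_antisymm := fun _ _ => antisymm_of R.le
    le_total := total_of R.le
    toDecidableLE := Classical.decRel _ }

theorem orderEquiv_unique {S T : OrdBin ι} [Finite S.V] {e e' : S.V ≃ T.V}
    (he : ∀ x y, S.le x y ↔ T.le (e x) (e y)) (he' : ∀ x y, S.le x y ↔ T.le (e' x) (e' y)) :
    e = e' := by
  let := S.toLinearOrder
  let := T.toLinearOrder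
  let o : S.V ≃o T.V := ⟨e, fun {x y} => (he x y).symm⟩
  let o' : S.V ≃o T.V := ⟨e', fun {x y} => (he' x y).symm⟩
  exact congrArg RelIso.toEquiv (Subsingleton.elim o o')

theorem exists_orderEquiv_restrict (R : OrdBin ι) {A A' : Set R.V} (hA : A.Finite)
    (hA' : A'.Finite) (hcard : A.ncard = A'.ncard) :
    ∃ e : A ≃ A', ∀ x y : A, R.le x y ↔ R.le (e x) (e y) := by
  let := R.toLinearOrder
  have := hA.fintype
  have := hA'.fintype
  have hcA : Fintype.card A = A.ncard := Set.fintypeCard_eq_ncard A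
  have hcA' : Fintype.card A' = A.ncard := hcard ▸ Set.fintypeCard_eq_ncard A'
  let e : A ≃o A' := (monoEquivOfFin A hcA).symm.trans (monoEquivOfFin A' hcA')
  exact ⟨e.toEquiv, fun x y => e.le_iff_le.symm⟩

theorem Iso.comp {S T : OrdBin ι} (h : Iso S T) (i : ι) : Iso (S.comp i) (T.comp i) :=
  let ⟨e, hle, hrel⟩ := h
  ⟨e, hle, fun _ => hrel i⟩

theorem Iso.of_comp {S T : OrdBin ι} [Finite S.V] {e : S.V ≃ T.V}
    (he : ∀ x y, S.le x y ↔ T.le (e x) (e y)) (h : ∀ i, Iso (S.comp i) (T.comp i)) :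
    Iso S T := by
  refine ⟨e, he, fun i x y => ?_⟩
  obtain ⟨ei, hlei, hreli⟩ := h i
  have : Finite (S.comp i).V := ‹Finite S.V›
  rw [← orderEquiv_unique hlei he]
  exact hreli 0 x y

theorem MonoPart.anti {R : OrdBin ι} {B B' : Set R.V} (hB : B ⊆ B') (h : R.MonoPart B') :
    R.MonoPart B := by
  intro A A' hA hA' hcard hdiff
  have hdiff' : ∀ X : Set R.V, (X \ B) \ B' = X \ B' := fun X => by
    rw [Set.sdiff_sdiff, Set.union_eq_self_of_subset_left hB]
  refine h A A' hA hA' hcard ?_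
  rw [← hdiff' A, ← hdiff' A', hdiff]

theorem monoPart_iff_forall_comp {R : OrdBin ι} {B : Set R.V} :
    R.MonoPart B ↔ ∀ i, (R.comp i).MonoPart B := by
  refine ⟨fun h i A A' hA hA' hcard hdiff => (h A A' hA hA' hcard hdiff).comp i,
    fun h A A' hA hA' hcard hdiff => ?_⟩
  have : Finite (R.restrict A).V := hA.to_subtype
  obtain ⟨e, he⟩ := R.exists_orderEquiv_restrict hA hA' hcard
  exact Iso.of_comp he fun i => h i A A' hA hA' hcard hdiff

theorem hasFiniteMonoDecomp_iff_forall_comp [Finite ι] (R : OrdBin ι) :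
    R.HasFiniteMonoDecomp ↔ ∀ i, (R.comp i).HasFiniteMonoDecomp := by
  refine ⟨fun ⟨P, ⟨hpart, hmono⟩, hfin⟩ i =>
    ⟨P, ⟨hpart, fun B hB => monoPart_iff_forall_comp.1 (hmono B hB) i⟩, hfin⟩, fun h => ?_⟩
  choose P hP hfin using h
  obtain ⟨Q, hpart, hfinQ, hrefine⟩ :=
    Setoid.IsPartition.exists_finite_common_refinement (fun i => (hP i).1) hfin
  refine ⟨Q, ⟨hpart, fun B hB => monoPart_iff_forall_comp.2 fun i => ?_⟩, hfinQ⟩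
  obtain ⟨C, hC, hBC⟩ := hrefine B hB i
  exact ((hP i).2 C hC).anti hBC

end OrdBin

/-- An ordered binary structure `R = (V, ≤, ρ_1, …, ρ_k)` of type `k` has a
finite monomorphic decomposition iff each `R_i = (V, ≤, ρ_i)` has one. -/
theorem hasFiniteMonoDecomp_iff_components {k : ℕ} (R : OrdBin (Fin k)) :
    R.HasFiniteMonoDecomp ↔
      ∀ i : Fin k,
        OrdBin.HasFiniteMonoDecomp
          (⟨R.V, R.le, R.linear, fun _ => R.rel i⟩ : OrdBin (Fin 1)) :=
  R.hasFiniteMonoDecomp_iff_forall_comp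
end

section
/- Let R = (V, (ρ_i)_{i∈I}) be a relational structure. For every m ∈ ℕ, the relations ≃_{m,R}, ≃_{≤m,R} and ≃_R are equivalence relations on V. Moreover, every equivalence class of ≃_R is a monomorphic part of R, and every monomorphic part of R is contained in a single equivalence class of ≃_R; hence the equivalence classes of ≃_R are exactly the maximal monomorphic parts (the monomorphic components) of R. -/
/-- A relational structure of signature `ar : ι → ℕ`: a domain `V` together with,
for each `i : ι`, an `ar i`-ary relation on `V`. -/
structure RelStruct (ι : Type) (ar : ι → ℕ) where
  V : Type
  rel : ∀ i : ι, (Fin (ar i) → V) → Prop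

namespace RelStruct

variable {ι : Type} {ar : ι → ℕ}

/-- The substructure induced on a subset `A` of the domain. -/
def restrict (R : RelStruct ι ar) (A : Set R.V) : RelStruct ι ar where
  V := A
  rel := fun i f => R.rel i fun j => (f j : R.V)

/-- Isomorphism of relational structures: a bijection of the domains transporting
each relation onto the corresponding one. -/
def Iso (R S : RelStruct ι ar) : Prop :=
  ∃ e : R.V ≃ S.V, ∀ (i : ι) (f : Fin (ar i) → R.V), R.rel i f ↔ S.rel i fun j => e (f j)

/-- `R` embeds in `S` if `R` is isomorphic to an induced substructure of `S`. -/
def Embeds (R S : RelStruct ι ar) : Prop :=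
  ∃ A : Set S.V, Iso R (S.restrict A)

/-- `B` is a monomorphic part of `R`: any two finite subsets of the domain of the
same cardinality which agree outside `B` induce isomorphic substructures. -/
def MonoPart (R : RelStruct ι ar) (B : Set R.V) : Prop :=
  ∀ A A' : Set R.V, A.Finite → A'.Finite → A.ncard = A'.ncard →
    A \ B = A' \ B → Iso (R.restrict A) (R.restrict A')

/-- A monomorphic decomposition of `R`: a partition of the domain into monomorphic parts. -/
def MonoDecomp (R : RelStruct ι ar) (P : Set (Set R.V)) : Prop :=
  Setoid.IsPartition P ∧ ∀ B ∈ P, R.MonoPart B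

/-- `R` has a monomorphic decomposition with finitely many blocks. -/
def HasFiniteMonoDecomp (R : RelStruct ι ar) : Prop :=
  ∃ P : Set (Set R.V), R.MonoDecomp P ∧ P.Finite

/-- The age of `R`: the class of finite structures embeddable in `R`. -/
def Age (R : RelStruct ι ar) : Set (RelStruct ι ar) :=
  {S | Finite S.V ∧ Embeds S R}

/-- A hereditary class of finite structures: all members are finite, and every
structure embeddable in a member is again a member. -/
def Hereditary (C : Set (RelStruct ι ar)) : Prop :=
  (∀ R ∈ C, Finite R.V) ∧ ∀ R ∈ C, ∀ S : RelStruct ι ar, Embeds S R → S ∈ C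

/-- `x` and `y` are `F`-equivalent: the substructures induced on `{x} ∪ F` and
`{y} ∪ F` are isomorphic. -/
def EqF (R : RelStruct ι ar) (F : Set R.V) (x y : R.V) : Prop :=
  Iso (R.restrict (insert x F)) (R.restrict (insert y F))

/-- `x ≃_{m,R} y`: `x` and `y` are `F`-equivalent for every `m`-element subset `F`
of `V \ {x, y}`. -/
def EqM (R : RelStruct ι ar) (m : ℕ) (x y : R.V) : Prop :=
  ∀ F : Set R.V, F.Finite → F.ncard = m → x ∉ F → y ∉ F → EqF R F x y

/-- `x ≃_{≤m,R} y`: `x ≃_{m',R} y` for every `m' ≤ m`. -/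
def EqLe (R : RelStruct ι ar) (m : ℕ) (x y : R.V) : Prop :=
  ∀ m' ≤ m, EqM R m' x y

/-- `x ≃_R y`: `x ≃_{m,R} y` for every `m`. -/
def EqR (R : RelStruct ι ar) (x y : R.V) : Prop :=
  ∀ m : ℕ, EqM R m x y

/-- The profile of `R`: the number of induced substructures on `n`-element subsets
of the domain, counted up to isomorphism. -/
noncomputable def profileR (R : RelStruct ι ar) (n : ℕ) : ℕ :=
  Nat.card (Quot fun (A B : {A : Set R.V // A.Finite ∧ A.ncard = n}) =>
    Iso (R.restrict A.1) (R.restrict B.1))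

end RelStruct

/-
Isomorphism of induced substructures is an equivalence, so `≃_{F,R}` is symmetric
and reflexive; transitivity of `≃_{m,R}` is only delicate when the middle point `y` lies in
`F = {y} ∪ F₀`, and then one passes from `{x, y} ∪ F₀` to `{y, z} ∪ F₀` through `{x, z} ∪ F₀`,
using `y ≃ z` over `{x} ∪ F₀` and `x ≃ y` over `{z} ∪ F₀`. The relations `≃_{≤m,R}` and `≃_R`
are intersections of these. Two finite sets of the same size agreeing outside a class `B` of
`≃_R` differ by finitely many exchanges of one point of `B` for another, and each exchange
preserves the isomorphism type. Conversely, if `B` is monomorphic and `x, y ∈ B`, then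
`{x} ∪ F` and `{y} ∪ F` agree outside `B`.
-/

theorem equivalence_forall {α : Sort*} {ι : Sort*} {r : ι → α → α → Prop}
    (h : ∀ i, Equivalence (r i)) : Equivalence fun x y => ∀ i, r i x y where
  refl x i := (h i).refl x
  symm hxy i := (h i).symm (hxy i)
  trans hxy hyz i := (h i).trans (hxy i) (hyz i)

namespace RelStruct

variable {ι : Type} {ar : ι → ℕ}

theorem Iso.refl (S : RelStruct ι ar) : Iso S S :=
  ⟨Equiv.refl _, fun _ _ => Iff.rfl⟩

theorem Iso.symm {S T : RelStruct ι ar} (h : Iso S T) : Iso T S := by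
  obtain ⟨e, he⟩ := h
  exact ⟨e.symm, fun i f => by simpa using (he i fun j => e.symm (f j)).symm⟩

theorem Iso.trans {S T U : RelStruct ι ar} (h : Iso S T) (h' : Iso T U) : Iso S U := by
  obtain ⟨e, he⟩ := h
  obtain ⟨e', he'⟩ := h'
  exact ⟨e.trans e', fun i f => (he i f).trans (he' i _)⟩

theorem iso_restrict_of_eq (R : RelStruct ι ar) {A A' : Set R.V} (h : A = A') :
    Iso (R.restrict A) (R.restrict A') :=
  h ▸ Iso.refl _

section Equivalences

variable {R : RelStruct ι ar} {m : ℕ} {x y z : R.V}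

theorem EqM.trans (hxy : EqM R m x y) (hyz : EqM R m y z) : EqM R m x z := by
  intro F hF hcard hx hz
  by_cases hy : y ∉ F
  · exact (hxy F hF hcard hx hy).trans (hyz F hF hcard hy hz)
  obtain ⟨F₀, hyF₀, rfl⟩ : ∃ F₀, y ∉ F₀ ∧ F = insert y F₀ :=
    ⟨F \ {y}, by simp, by simp [not_not.mp hy]⟩
  obtain ⟨hxy', hxF₀⟩ : x ≠ y ∧ x ∉ F₀ := by simpa using hx
  obtain ⟨hzy', hzF₀⟩ : z ≠ y ∧ z ∉ F₀ := by simpa using hz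
  by_cases hxz : x = z
  · exact hxz ▸ Iso.refl _
  have hF₀ : F₀.Finite := hF.subset (Set.subset_insert y F₀)
  have hcard' : ∀ u ∉ F₀, (insert u F₀).ncard = m := fun u hu => by
    rw [← hcard, Set.ncard_insert_of_notMem hu hF₀, Set.ncard_insert_of_notMem hyF₀ hF₀]
  have hyz' : Iso (R.restrict (insert y (insert x F₀))) (R.restrict (insert z (insert x F₀))) :=
    hyz _ (hF₀.insert x) (hcard' x hxF₀) (by simp [Ne.symm hxy', hyF₀])
      (by simp [Ne.symm hxz, hzF₀])
  have hxy'' : Iso (R.restrict (insert x (insert z F₀))) (R.restrict (insert y (insert z F₀))) :=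
    hxy _ (hF₀.insert z) (hcard' z hzF₀) (by simp [hxz, hxF₀]) (by simp [Ne.symm hzy', hyF₀])
  rw [Set.insert_comm x z] at hxy''
  rw [EqF, Set.insert_comm x y, Set.insert_comm z y]
  exact hyz'.trans hxy''

variable (R)

theorem eqM_equivalence (m : ℕ) : Equivalence (EqM R m) where
  refl _ _ _ _ _ _ := Iso.refl _
  symm h F hF hc hy hx := (h F hF hc hx hy).symm
  trans := EqM.trans

theorem eqLe_equivalence (m : ℕ) : Equivalence (EqLe R m) :=
  equivalence_forall fun m' => equivalence_forall fun (_ : m' ≤ m) => eqM_equivalence R m'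

theorem eqR_equivalence : Equivalence (EqR R) :=
  equivalence_forall (eqM_equivalence R)

end Equivalences

theorem EqR.iso_restrict_exchange {R : RelStruct ι ar} {a a' : R.V} (h : EqR R a a')
    {A : Set R.V} (hA : A.Finite) (ha : a ∈ A) (ha' : a' ∉ A) :
    Iso (R.restrict A) (R.restrict (insert a' (A \ {a}))) := by
  have hiso := h _ (A \ {a}) hA.sdiff rfl (by simp) (fun h' => ha' h'.1)
  rwa [EqF, Set.insert_sdiff_singleton, Set.insert_eq_self.mpr ha] at hiso

theorem iso_restrict_of_pairwise_eqR (R : RelStruct ι ar) {B : Set R.V}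
    (hB : ∀ x ∈ B, ∀ y ∈ B, EqR R x y) (n : ℕ) {A A' : Set R.V} (hA : A.Finite)
    (hA' : A'.Finite) (hcard : A.ncard = A'.ncard) (hdiff : A \ B = A' \ B)
    (hn : (A \ A').ncard = n) : Iso (R.restrict A) (R.restrict A') := by
  induction n generalizing A with
  | zero =>
    have hsub : A ⊆ A' := Set.sdiff_eq_empty.mp ((Set.ncard_eq_zero hA.sdiff).mp hn)
    exact iso_restrict_of_eq R (Set.eq_of_subset_of_ncard_le hsub hcard.ge hA')
  | succ n ih =>
    have hsymm : (A' \ A).ncard = n + 1 := by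
      have h₁ := Set.ncard_sdiff_add_ncard A A' hA hA'
      have h₂ := Set.ncard_sdiff_add_ncard A' A hA' hA
      rw [Set.union_comm] at h₂
      omega
    obtain ⟨a, haA, haNA'⟩ := Set.nonempty_of_ncard_ne_zero (s := A \ A') (by omega)
    obtain ⟨a', ha'A', ha'NA⟩ := Set.nonempty_of_ncard_ne_zero (s := A' \ A) (by omega)
    have mem_B {u : R.V} {s t : Set R.V} (hst : s \ B = t \ B) (hs : u ∈ s) (ht : u ∉ t) :
        u ∈ B := by
      by_contra hu
      have hut : u ∈ t \ B := hst ▸ (⟨hs, hu⟩ : u ∈ s \ B)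
      exact ht hut.1
    have haB := mem_B hdiff haA haNA'
    have ha'B := mem_B hdiff.symm ha'A' ha'NA
    have hexchange := (hB a haB a' ha'B).iso_restrict_exchange hA haA ha'NA
    refine hexchange.trans (ih (hA.sdiff.insert a') ?_ ?_ ?_)
    · rw [Set.ncard_insert_of_notMem (fun h => ha'NA h.1) hA.sdiff,
        Set.ncard_sdiff_singleton_add_one haA hA, hcard]
    · rw [Set.insert_sdiff_of_mem _ ha'B, Set.sdiff_sdiff_comm,
        Set.sdiff_singleton_eq_self (fun h => h.2 haB), hdiff]
    · rw [Set.insert_sdiff_of_mem _ ha'A', Set.sdiff_sdiff_comm,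
        Set.ncard_sdiff_singleton_of_mem (Set.mem_sdiff_of_mem haA haNA'), hn, Nat.add_sub_cancel]

theorem monoPart_of_pairwise_eqR (R : RelStruct ι ar) {B : Set R.V}
    (hB : ∀ x ∈ B, ∀ y ∈ B, EqR R x y) : R.MonoPart B :=
  fun _ _ hA hA' hcard hdiff => iso_restrict_of_pairwise_eqR R hB _ hA hA' hcard hdiff rfl

theorem MonoPart.eqR {R : RelStruct ι ar} {B : Set R.V} (hB : R.MonoPart B) {x y : R.V}
    (hx : x ∈ B) (hy : y ∈ B) : EqR R x y := by
  intro m F hF _ hxF hyF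
  refine hB _ _ (hF.insert x) (hF.insert y) ?_ ?_
  · rw [Set.ncard_insert_of_notMem hxF hF, Set.ncard_insert_of_notMem hyF hF]
  · rw [Set.insert_sdiff_of_mem _ hx, Set.insert_sdiff_of_mem _ hy]

end RelStruct

/-- For a relational structure `R`, the relations `≃_{m,R}`, `≃_{≤m,R}` and
`≃_R` are equivalence relations; moreover every equivalence class of `≃_R` is a
monomorphic part of `R`, and every monomorphic part is contained in a single class of
`≃_R` (so the classes of `≃_R` are the monomorphic components of `R`). -/
theorem equivalences_and_monomorphic_components {ι : Type} {ar : ι → ℕ}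
    (R : RelStruct ι ar) :
    (∀ m : ℕ, Equivalence (RelStruct.EqM R m)) ∧
    (∀ m : ℕ, Equivalence (RelStruct.EqLe R m)) ∧
    Equivalence (RelStruct.EqR R) ∧
    (∀ x : R.V, R.MonoPart {y | RelStruct.EqR R x y}) ∧
    (∀ B : Set R.V, R.MonoPart B → ∀ x ∈ B, ∀ y ∈ B, RelStruct.EqR R x y) := by
  have hR := RelStruct.eqR_equivalence R
  refine ⟨RelStruct.eqM_equivalence R, RelStruct.eqLe_equivalence R, hR, fun x => ?_,
    fun B hB x hx y hy => hB.eqR hx hy⟩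
  exact RelStruct.monoPart_of_pairwise_eqR R fun y hy z hz => hR.trans (hR.symm hy) hz
end

section
/- Let R = (V, ≤, (ρ_i)_{i∈I}) be an ordered binary structure. The following are equivalent: (1) R is monomorphic; (2) R is (≤2)-monomorphic; (3) for each i ∈ I one of the following holds for all x, y ∈ V: ρ_i(x,y) ⟺ x ≤ y; ρ_i(x,y) ⟺ y ≤ x; ρ_i(x,y) ⟺ x < y; ρ_i(x,y) ⟺ y < x; ρ_i(x,y) holds always; ρ_i(x,y) ⟺ x ≠ y; ρ_i(x,y) ⟺ x = y; or ρ_i(x,y) holds never. -/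
theorem nonempty_orderIso_of_natCard_eq {α β : Type*} [LinearOrder α] [LinearOrder β]
    [Finite α] [Finite β] (h : Nat.card α = Nat.card β) : Nonempty (α ≃o β) := by
  have := Fintype.ofFinite α
  have := Fintype.ofFinite β
  rw [Nat.card_eq_fintype_card, Nat.card_eq_fintype_card] at h
  exact ⟨(monoEquivOfFin α h).symm.trans (monoEquivOfFin β rfl)⟩

namespace OrdBin

variable {ι : Type} (R : OrdBin ι)

instance : IsLinearOrder R.V R.le := R.linear

noncomputable abbrev linearOrder : LinearOrder R.V where
  le := R.le
  le_refl := refl_of R.le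
  le_trans _ _ _ := trans_of R.le
  le_antisymm _ _ := antisymm_of R.le
  le_total := total_of R.le
  toDecidableLE _ _ := Classical.dec _

theorem trichotomous (x y : R.V) :
    x = y ∨ (R.le x y ∧ x ≠ y ∧ ¬ R.le y x) ∨ (R.le y x ∧ x ≠ y ∧ ¬ R.le x y) := by
  by_cases hxy : x = y
  · exact Or.inl hxy
  · rcases total_of R.le x y with h | h
    · exact Or.inr <| Or.inl ⟨h, hxy, fun h' => hxy (antisymm_of R.le h h')⟩
    · exact Or.inr <| Or.inr ⟨h, hxy, fun h' => hxy (antisymm_of R.le h' h)⟩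

def orderRel (a b c : Prop) (x y : R.V) : Prop :=
  (x = y ∧ a) ∨ ((R.le x y ∧ x ≠ y) ∧ b) ∨ ((R.le y x ∧ x ≠ y) ∧ c)

def IsOrderDetermined (i : ι) : Prop :=
  ∃ a b c : Prop, ∀ x y, R.rel i x y ↔ R.orderRel a b c x y

theorem iff_orderRel {P : R.V → R.V → Prop} {a b c : Prop} (hd : ∀ x, P x x ↔ a)
    (hlt : ∀ x y, R.le x y → x ≠ y → (P x y ↔ b))
    (hgt : ∀ x y, R.le y x → x ≠ y → (P x y ↔ c)) (x y : R.V) :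
    P x y ↔ R.orderRel a b c x y := by
  rcases R.trichotomous x y with rfl | ⟨h1, h2, h3⟩ | ⟨h1, h2, h3⟩
  · simp [orderRel, hd]
  · simp [orderRel, hlt x y h1 h2, h1, h2, h3]
  · simp [orderRel, hgt x y h1 h2, h1, h2, h3]

theorem orderRel_forms (x y : R.V) :
    (R.orderRel True True False x y ↔ R.le x y) ∧
    (R.orderRel True False True x y ↔ R.le y x) ∧
    (R.orderRel False True False x y ↔ R.le x y ∧ x ≠ y) ∧
    (R.orderRel False False True x y ↔ R.le y x ∧ x ≠ y) ∧
    R.orderRel True True True x y ∧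
    (R.orderRel False True True x y ↔ x ≠ y) ∧
    (R.orderRel True False False x y ↔ x = y) ∧
    ¬ R.orderRel False False False x y := by
  rcases R.trichotomous x y with rfl | ⟨h1, h2, h3⟩ | ⟨h1, h2, h3⟩ <;>
    simp [orderRel, refl_of R.le, *]

theorem isOrderDetermined_iff (i : ι) : R.IsOrderDetermined i ↔
      (∀ x y : R.V, R.rel i x y ↔ R.le x y) ∨
      (∀ x y : R.V, R.rel i x y ↔ R.le y x) ∨
      (∀ x y : R.V, R.rel i x y ↔ (R.le x y ∧ x ≠ y)) ∨
      (∀ x y : R.V, R.rel i x y ↔ (R.le y x ∧ x ≠ y)) ∨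
      (∀ x y : R.V, R.rel i x y) ∨
      (∀ x y : R.V, R.rel i x y ↔ x ≠ y) ∨
      (∀ x y : R.V, R.rel i x y ↔ x = y) ∨
      (∀ x y : R.V, ¬ R.rel i x y) := by
  constructor
  · rintro ⟨a, b, c, h⟩
    by_cases ha : a <;> by_cases hb : b <;> by_cases hc : c <;> simp only [ha, hb, hc] at h <;>
      simp [h, orderRel_forms]
  · rintro (h | h | h | h | h | h | h | h)
    · exact ⟨True, True, False, by simp [h, orderRel_forms]⟩
    · exact ⟨True, False, True, by simp [h, orderRel_forms]⟩
    · exact ⟨False, True, False, by simp [h, orderRel_forms]⟩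
    · exact ⟨False, False, True, by simp [h, orderRel_forms]⟩
    · exact ⟨True, True, True, by simp [h, orderRel_forms]⟩
    · exact ⟨False, True, True, by simp [h, orderRel_forms]⟩
    · exact ⟨True, False, False, by simp [h, orderRel_forms]⟩
    · exact ⟨False, False, False, by simp [h, orderRel_forms]⟩

theorem rel_self_iff_of_nMono_one (h1 : R.NMono 1) (i : ι) (x y : R.V) :
    R.rel i x x ↔ R.rel i y y := by
  obtain ⟨e, -, hrel⟩ := h1 {x} {y} (Set.finite_singleton x) (Set.finite_singleton y)
    (Set.ncard_singleton x) (Set.ncard_singleton y)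
  have hy : (e ⟨x, rfl⟩).1 = y := (e ⟨x, rfl⟩).2
  rw [← hy]
  exact hrel i ⟨x, rfl⟩ ⟨x, rfl⟩

theorem eq_and_eq_of_mem_pair {x y u v : R.V} (hxy : R.le x y) (hne : x ≠ y)
    (hu : u ∈ ({x, y} : Set R.V)) (hv : v ∈ ({x, y} : Set R.V)) (huv : R.le u v) (hne' : u ≠ v) :
    u = x ∧ v = y := by
  rcases hu with rfl | rfl <;> rcases hv with rfl | rfl
  · exact absurd rfl hne'
  · exact ⟨rfl, rfl⟩
  · exact absurd (antisymm_of R.le hxy huv) hne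
  · exact absurd rfl hne'

theorem dEq_of_nMono_two (h2 : R.NMono 2) {x y x' y' : R.V} (hxy : R.le x y) (hne : x ≠ y)
    (hxy' : R.le x' y') (hne' : x' ≠ y') : R.dEq x y x' y' := by
  obtain ⟨e, hle, hrel⟩ := h2 {x, y} {x', y'} (Set.toFinite _) (Set.toFinite _)
    (Set.ncard_pair hne) (Set.ncard_pair hne')
  let p : (R.restrict {x, y}).V := ⟨x, Set.mem_insert x {y}⟩
  let q : (R.restrict {x, y}).V := ⟨y, Set.mem_insert_of_mem x rfl⟩
  have hpq : (e p).1 ≠ (e q).1 := fun h =>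
    hne (congrArg Subtype.val (e.injective (Subtype.ext h)))
  obtain ⟨hp, hq⟩ := R.eq_and_eq_of_mem_pair hxy' hne' (e p).2 (e q).2 ((hle p q).1 hxy) hpq
  exact fun i => ⟨(hrel i p q).trans (iff_of_eq (congrArg₂ (R.rel i) hp hq)),
    (hrel i q p).trans (iff_of_eq (congrArg₂ (R.rel i) hq hp))⟩

theorem isOrderDetermined_of_nMono_one_of_nMono_two (h1 : R.NMono 1) (h2 : R.NMono 2)
    (i : ι) : R.IsOrderDetermined i := by
  refine ⟨∃ z, R.rel i z z, ∃ u v, (R.le u v ∧ u ≠ v) ∧ R.rel i u v,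
    ∃ u v, (R.le u v ∧ u ≠ v) ∧ R.rel i v u, R.iff_orderRel ?_ ?_ ?_⟩
  · exact fun x => ⟨fun h => ⟨x, h⟩, fun ⟨z, hz⟩ => (R.rel_self_iff_of_nMono_one h1 i z x).1 hz⟩
  · exact fun x y hxy hne => ⟨fun h => ⟨x, y, ⟨hxy, hne⟩, h⟩,
      fun ⟨u, v, ⟨huv, hne'⟩, h⟩ => ((R.dEq_of_nMono_two h2 hxy hne huv hne' i).1).2 h⟩
  · exact fun x y hyx hne => ⟨fun h => ⟨y, x, ⟨hyx, hne.symm⟩, h⟩,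
      fun ⟨u, v, ⟨huv, hne'⟩, h⟩ => ((R.dEq_of_nMono_two h2 hyx hne.symm huv hne' i).2).2 h⟩

theorem exists_le_equiv_restrict {A A' : Set R.V} (hA : A.Finite) (hA' : A'.Finite)
    (h : A.ncard = A'.ncard) :
    ∃ e : (R.restrict A).V ≃ (R.restrict A').V, ∀ x y, R.le x.1 y.1 ↔ R.le (e x).1 (e y).1 := by
  let := R.linearOrder
  have := hA.to_subtype
  have := hA'.to_subtype
  obtain ⟨f⟩ := nonempty_orderIso_of_natCard_eq (α := A) (β := A')
    (by rwa [Nat.card_coe_set_eq, Nat.card_coe_set_eq])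
  exact ⟨f.toEquiv, fun x y => f.le_iff_le.symm⟩

theorem mono_of_isOrderDetermined (h : ∀ i, R.IsOrderDetermined i) : R.Mono := by
  intro n A A' hA hA' hn hn'
  obtain ⟨e, he⟩ := R.exists_le_equiv_restrict hA hA' (hn.trans hn'.symm)
  refine ⟨e, he, fun i x y => ?_⟩
  obtain ⟨a, b, c, hi⟩ := h i
  have heq : x.1 = y.1 ↔ (e x).1 = (e y).1 :=
    Subtype.ext_iff.symm.trans (e.apply_eq_iff_eq.symm.trans Subtype.ext_iff)
  change R.rel i x.1 y.1 ↔ R.rel i (e x).1 (e y).1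
  simp only [hi, orderRel, ne_eq, he x y, he y x, heq]

end OrdBin

/-- An ordered binary structure `R = (V, ≤, (ρ_i)_{i∈I})` is monomorphic iff
it is `(≤2)`-monomorphic, iff each relation `ρ_i` is one of the eight listed forms:
`≤`, its converse, `<`, its converse, the full relation, `≠`, `=`, or the empty relation. -/
theorem monomorphic_iff_le_two_monomorphic_iff_forms {ι : Type} (R : OrdBin ι) :
    (OrdBin.Mono R ↔ OrdBin.LeMono R 2) ∧
    (OrdBin.Mono R ↔ ∀ i : ι,
      (∀ x y : R.V, R.rel i x y ↔ R.le x y) ∨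
      (∀ x y : R.V, R.rel i x y ↔ R.le y x) ∨
      (∀ x y : R.V, R.rel i x y ↔ (R.le x y ∧ x ≠ y)) ∨
      (∀ x y : R.V, R.rel i x y ↔ (R.le y x ∧ x ≠ y)) ∨
      (∀ x y : R.V, R.rel i x y) ∨
      (∀ x y : R.V, R.rel i x y ↔ x ≠ y) ∨
      (∀ x y : R.V, R.rel i x y ↔ x = y) ∨
      (∀ x y : R.V, ¬ R.rel i x y)) := by
  have isOrderDetermined_of_leMono (h : R.LeMono 2) (i : ι) : R.IsOrderDetermined i :=
    R.isOrderDetermined_of_nMono_one_of_nMono_two (h 1 (by norm_num)) (h 2 le_rfl) i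
  refine ⟨⟨fun h m _ => h m, fun h => R.mono_of_isOrderDetermined (isOrderDetermined_of_leMono h)⟩,
    ⟨fun h i => ?_, fun h => R.mono_of_isOrderDetermined fun i => ?_⟩⟩
  · exact (R.isOrderDetermined_iff i).1 (isOrderDetermined_of_leMono (fun m _ => h m) i)
  · exact (R.isOrderDetermined_iff i).2 (h i)
end

section
/- Let R = (V, ≤, (ρ_i)_{i∈I}) be an ordered binary structure and let x, y ∈ V with x < y. Then x ≃_{≤2,R} y if and only if [x,y] is an interval of R, the restriction of R to [x,y] is 1-monomorphic, and the induced substructures of R on any two 2-element subsets of [x,y] distinct from {x,y} are isomorphic. -/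
/-!
An isomorphism between finite induced substructures preserves the linear order, so it is the
unique increasing bijection; it is therefore determined by, and exists exactly when it respects,
the loops `ρ_i(a, a)` and the values `d(a, b)` on increasing pairs. For `|F| ≤ 2` the increasing
bijection `{x} ∪ F → {y} ∪ F` fixes the points of `F` outside `[x, y]` and moves those inside one
step towards `y`. With `F = {w}` and `F = {u, w}`, `w ∉ [x, y]`, this gives
`d(x, w) = d(y, w) = d(u, w)`; with `F = {z}` and `F = {z, z'}` inside, it gives
`d(x, z) = d(z, y)`, `d(x, z) = d(z, z')` and `d(x, z') = d(z, y)`, which chain all pairs of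
`[x, y]` other than `{x, y}` together. Conversely, an isomorphism inside the interval `[x, y]`
extends by the identity outside it, so the three conditions even give `x ≃_{F,R} y` for every
finite `F`.
-/

namespace OrdBin

variable {ι : Type}

/-- With this instance `R.restrict A` carries the subtype order of `A` definitionally. -/
noncomputable instance (R : OrdBin ι) : LinearOrder R.V :=
  haveI := R.linear
  { le := R.le
    le_refl := refl_of R.le
    le_trans := fun _ _ _ => trans_of R.le
    le_antisymm := fun _ _ => antisymm_of R.le
    le_total := total_of R.le
    toDecidableLE := Classical.decRel _ }

variable {R : OrdBin ι}

theorem dEq.symm {a b a' b' : R.V} (h : dEq R a b a' b') : dEq R a' b' a b :=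
  fun i => ⟨(h i).1.symm, (h i).2.symm⟩

theorem dEq.trans {a b a' b' a'' b'' : R.V} (h : dEq R a b a' b') (h' : dEq R a' b' a'' b'') :
    dEq R a b a'' b'' :=
  fun i => ⟨(h i).1.trans (h' i).1, (h i).2.trans (h' i).2⟩

theorem dEq.swap {a b a' b' : R.V} (h : dEq R a b a' b') : dEq R b a b' a' :=
  fun i => ⟨(h i).2, (h i).1⟩

theorem dEq_rfl {a b : R.V} : dEq R a b a b := fun _ => ⟨Iff.rfl, Iff.rfl⟩

theorem rel_iff_of_iso_of_strictMonoOn {A A' : Set R.V} (hA : A.Finite)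
    (h : Iso (R.restrict A) (R.restrict A')) {f : R.V → R.V} (hf : StrictMonoOn f A)
    (hmaps : Set.MapsTo f A A') (i : ι) {a b : R.V} (ha : a ∈ A) (hb : b ∈ A) :
    R.rel i a b ↔ R.rel i (f a) (f b) := by
  obtain ⟨e, hle, hrel⟩ := h
  have := hA.to_subtype
  let eo : A ≃o A' := ⟨e, fun {a b} => (hle a b).symm⟩
  have hg : StrictMono (hmaps.restrict f A A') := fun a b hab => hf a.2 b.2 hab
  -- Order isomorphisms out of a finite linear order are unique, so `e` is `f` on `A`.
  have he : eo = hg.orderIsoOfSurjective _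
      ((Finite.injective_iff_surjective_of_equiv (α := A) e).1 hg.injective) :=
    Subsingleton.elim _ _
  have hef : ∀ c : A, (e c).1 = f c := fun c => congrArg Subtype.val (congrArg (· c) he)
  rw [← hef ⟨a, ha⟩, ← hef ⟨b, hb⟩]
  exact hrel i ⟨a, ha⟩ ⟨b, hb⟩

theorem rel_iff_of_iso_range {n : ℕ} {u v : Fin n → R.V} (hu : StrictMono u) (hv : StrictMono v)
    (h : Iso (R.restrict (Set.range u)) (R.restrict (Set.range v))) (i : ι) (j k : Fin n) :
    R.rel i (u j) (u k) ↔ R.rel i (v j) (v k) := by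
  have : Nonempty (Fin n) := ⟨j⟩
  have hinv : ∀ j, Function.invFun u (u j) = j := Function.leftInverse_invFun hu.injective
  have hmono : StrictMonoOn (v ∘ Function.invFun u) (Set.range u) := by
    rintro _ ⟨j, rfl⟩ _ ⟨k, rfl⟩ hjk
    simpa only [Function.comp, hinv, hv.lt_iff_lt, hu.lt_iff_lt] using hjk
  have hmaps : Set.MapsTo (v ∘ Function.invFun u) (Set.range u) (Set.range v) := by
    rintro _ ⟨j, rfl⟩
    exact ⟨j, by simp only [Function.comp, hinv]⟩
  simpa only [Function.comp, hinv] using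
    rel_iff_of_iso_of_strictMonoOn (Set.finite_range u) h hmono hmaps i ⟨j, rfl⟩ ⟨k, rfl⟩

theorem rel_self_iff_of_iso_singleton {a b : R.V} (h : Iso (R.restrict {a}) (R.restrict {b}))
    (i : ι) : R.rel i a a ↔ R.rel i b b :=
  rel_iff_of_iso_of_strictMonoOn (Set.finite_singleton a) h (Set.strictMonoOn_singleton _)
    (fun _ _ => rfl : Set.MapsTo (fun _ => b) {a} {b}) i rfl rfl

theorem rel_self_iff_and_dEq_of_iso_pair {a b a' b' : R.V} (hab : a < b) (hab' : a' < b')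
    (h : Iso (R.restrict {a, b}) (R.restrict {a', b'})) :
    (∀ i, R.rel i a a ↔ R.rel i a' a') ∧ dEq R a b a' b' := by
  have := rel_iff_of_iso_range (u := ![a, b]) (v := ![a', b'])
    (strictMono_vecEmpty.vecCons hab) (strictMono_vecEmpty.vecCons hab')
    (by simpa only [Matrix.range_cons, Matrix.range_empty, Set.union_empty, Set.singleton_union]
      using h)
  exact ⟨fun i => this i 0 0, fun i => ⟨this i 0 1, this i 1 0⟩⟩

theorem dEq_of_iso_triple {a b c a' b' c' : R.V} (hab : a < b) (hbc : b < c)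
    (hab' : a' < b') (hbc' : b' < c')
    (h : Iso (R.restrict {a, b, c}) (R.restrict {a', b', c'})) :
    dEq R a b a' b' ∧ dEq R a c a' c' ∧ dEq R b c b' c' := by
  have := rel_iff_of_iso_range (u := ![a, b, c]) (v := ![a', b', c'])
    ((strictMono_vecEmpty.vecCons hbc).vecCons hab)
    ((strictMono_vecEmpty.vecCons hbc').vecCons hab')
    (by simpa only [Matrix.range_cons, Matrix.range_empty, Set.union_empty, Set.singleton_union]
      using h)
  exact ⟨fun i => ⟨this i 0 1, this i 1 0⟩, fun i => ⟨this i 0 2, this i 2 0⟩,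
    fun i => ⟨this i 1 2, this i 2 1⟩⟩

theorem iso_restrict_of_dEq {A A' : Set R.V} (hA : A.Finite) (hA' : A'.Finite)
    (hcard : A.ncard = A'.ncard)
    (hloop : ∀ a ∈ A, ∀ a' ∈ A', ∀ i, R.rel i a a ↔ R.rel i a' a')
    (hpair : ∀ a ∈ A, ∀ b ∈ A, ∀ a' ∈ A', ∀ b' ∈ A', a < b → a' < b' → dEq R a b a' b') :
    Iso (R.restrict A) (R.restrict A') := by
  have := hA.fintype
  have := hA'.fintype
  have hcardA : Fintype.card A = A.ncard := by
    rw [← Nat.card_eq_fintype_card, Nat.card_coe_set_eq]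
  have hcardA' : Fintype.card A' = A.ncard := by
    rw [← Nat.card_eq_fintype_card, Nat.card_coe_set_eq, hcard]
  let φ : A ≃o A' := (Fintype.orderIsoFinOfCardEq A hcardA).symm.trans
    (Fintype.orderIsoFinOfCardEq A' hcardA')
  refine ⟨φ.toEquiv, fun a b => φ.le_iff_le.symm, fun i a b => ?_⟩
  rcases lt_trichotomy a b with hab | rfl | hba
  · exact (hpair _ a.2 _ b.2 _ (φ a).2 _ (φ b).2 hab (φ.lt_iff_lt.2 hab) i).1
  · exact hloop _ a.2 _ (φ a).2 i
  · exact (hpair _ b.2 _ a.2 _ (φ b).2 _ (φ a).2 hba (φ.lt_iff_lt.2 hba) i).2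

theorem le_iff_le_of_intervalLe {I : Set R.V} (hI : IntervalLe R I) {b b' w : R.V}
    (hb : b ∈ I) (hb' : b' ∈ I) (hw : w ∉ I) : (b ≤ w ↔ b' ≤ w) ∧ (w ≤ b ↔ w ≤ b') := by
  have below : ∀ {c c'}, c ∈ I → c' ∈ I → c ≤ w → c' ≤ w := fun hc hc' h =>
    le_of_not_gt fun hlt => hw (hI _ hc _ hc' w h hlt.le)
  have above : ∀ {c c'}, c ∈ I → c' ∈ I → w ≤ c → w ≤ c' := fun hc hc' h =>
    le_of_not_gt fun hlt => hw (hI _ hc' _ hc w hlt.le h)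
  exact ⟨⟨below hb hb', below hb' hb⟩, ⟨above hb hb', above hb' hb⟩⟩

theorem iso_union_of_intervalR {I B B' W : Set R.V} (hI : IntervalR R I) (hB : B ⊆ I)
    (hB' : B' ⊆ I) (hW : Disjoint W I) (h : Iso (R.restrict B) (R.restrict B')) :
    Iso (R.restrict (B ∪ W)) (R.restrict (B' ∪ W)) := by
  classical
  obtain ⟨e, hle, hrel⟩ := h
  have hBW : Disjoint B W := (hW.mono_right hB).symm
  have hB'W : Disjoint B' W := (hW.mono_right hB').symm
  let E : ↥(B ∪ W) ≃ ↥(B' ∪ W) := (Equiv.Set.union hBW).trans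
    ((e.sumCongr (Equiv.refl W)).trans (Equiv.Set.union hB'W).symm)
  have hEB : ∀ p : ↥(B ∪ W), (hp : p.1 ∈ B) → (E p).1 = (e ⟨p, hp⟩).1 := fun p hp => by
    change ((Equiv.Set.union hB'W).symm (e.sumCongr (Equiv.refl W) (Equiv.Set.union hBW p))).1 = _
    rw [Equiv.Set.union_apply_left hBW hp]
    rfl
  have hEW : ∀ p : ↥(B ∪ W), p.1 ∈ W → (E p).1 = p := fun p hp => by
    change ((Equiv.Set.union hB'W).symm (e.sumCongr (Equiv.refl W) (Equiv.Set.union hBW p))).1 = _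
    rw [Equiv.Set.union_apply_right hBW hp]
    rfl
  have hpres : ∀ r : R.V → R.V → Prop, (∀ p q : B, r p q ↔ r (e p).1 (e q).1) →
      (∀ b ∈ I, ∀ b' ∈ I, ∀ w ∉ I, (r b w ↔ r b' w) ∧ (r w b ↔ r w b')) →
      ∀ p q : ↥(B ∪ W), r p q ↔ r (E p) (E q) := by
    intro r he hout p q
    rcases p.2 with hp | hp <;> rcases q.2 with hq | hq
    · rw [hEB p hp, hEB q hq]; exact he ⟨p, hp⟩ ⟨q, hq⟩
    · rw [hEB p hp, hEW q hq]
      exact (hout _ (hB hp) _ (hB' (e ⟨p, hp⟩).2) _ (Set.disjoint_left.1 hW hq)).1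
    · rw [hEW p hp, hEB q hq]
      exact (hout _ (hB hq) _ (hB' (e ⟨q, hq⟩).2) _ (Set.disjoint_left.1 hW hp)).2
    · rw [hEW p hp, hEW q hq]
  exact ⟨E, hpres _ hle fun b hb b' hb' w hw => le_iff_le_of_intervalLe hI.1 hb hb' hw,
    fun i => hpres _ (hrel i) fun b hb b' hb' w hw => hI.2 b hb b' hb' w hw i⟩

theorem nMono_one_restrict_iff {I : Set R.V} :
    NMono (R.restrict I) 1 ↔ ∀ u ∈ I, ∀ v ∈ I, ∀ i, R.rel i u u ↔ R.rel i v v := by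
  refine ⟨fun h u hu v hv => rel_self_iff_of_iso_singleton (R := R.restrict I) (a := ⟨u, hu⟩)
    (b := ⟨v, hv⟩) (h _ _ (Set.finite_singleton _) (Set.finite_singleton _)
      (Set.ncard_singleton _) (Set.ncard_singleton _)), fun h A A' hA hA' hA1 hA'1 => ?_⟩
  obtain ⟨a, rfl⟩ := Set.ncard_eq_one.1 hA1
  refine iso_restrict_of_dEq hA hA' (hA1.trans hA'1.symm)
    (fun _ _ b _ => h _ (Subtype.prop _) _ b.2) fun _ hb _ hc _ _ _ _ hbc _ => ?_
  rw [Set.mem_singleton_iff] at hb hc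
  exact absurd (hb.trans hc.symm) hbc.ne

section PairCondition

variable {I : Set R.V} {x y : R.V}

theorem dEq_of_iso_pairs
    (h : ∀ A A' : Set R.V, A ⊆ I → A' ⊆ I → A.Finite → A'.Finite → A.ncard = 2 →
      A'.ncard = 2 → A ≠ {x, y} → A' ≠ {x, y} → Iso (R.restrict A) (R.restrict A')) :
    ∀ a ∈ I, ∀ b ∈ I, ∀ a' ∈ I, ∀ b' ∈ I, a < b → a' < b' →
      {a, b} ≠ ({x, y} : Set R.V) → {a', b'} ≠ ({x, y} : Set R.V) → dEq R a b a' b' :=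
  fun _ ha _ hb _ ha' _ hb' hab hab' hne hne' =>
    (rel_self_iff_and_dEq_of_iso_pair hab hab' (h _ _ (Set.pair_subset ha hb)
      (Set.pair_subset ha' hb') (Set.toFinite _) (Set.toFinite _) (Set.ncard_pair hab.ne)
      (Set.ncard_pair hab'.ne) hne hne')).2

theorem iso_pairs_of_dEq (hloop : ∀ u ∈ I, ∀ v ∈ I, ∀ i, R.rel i u u ↔ R.rel i v v)
    (hpair : ∀ a ∈ I, ∀ b ∈ I, ∀ a' ∈ I, ∀ b' ∈ I, a < b → a' < b' →
      {a, b} ≠ ({x, y} : Set R.V) → {a', b'} ≠ ({x, y} : Set R.V) → dEq R a b a' b') :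
    ∀ A A' : Set R.V, A ⊆ I → A' ⊆ I → A.Finite → A'.Finite → A.ncard = 2 →
      A'.ncard = 2 → A ≠ {x, y} → A' ≠ {x, y} → Iso (R.restrict A) (R.restrict A') := by
  intro A A' hI hI' hA hA' h2 h2' hne hne'
  have pair_eq : ∀ {B : Set R.V} {a b}, B.Finite → B.ncard = 2 → a ∈ B → b ∈ B → a < b →
      {a, b} = B := fun hB h2 ha hb hab =>
    Set.eq_of_subset_of_ncard_le (Set.pair_subset ha hb) (by rw [h2, Set.ncard_pair hab.ne]) hB
  refine iso_restrict_of_dEq hA hA' (h2.trans h2'.symm)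
    (fun u hu v hv => hloop u (hI hu) v (hI' hv))
    fun a ha b hb a' ha' b' hb' hab hab' => hpair a (hI ha) b (hI hb) a' (hI' ha') b' (hI' hb')
      hab hab' ?_ ?_
  · rwa [pair_eq hA h2 ha hb hab]
  · rwa [pair_eq hA' h2' ha' hb' hab']

end PairCondition

section Equivalence

variable {x y : R.V}

theorem EqM.rel_self_iff (h : EqM R 0 x y) (i : ι) : R.rel i x x ↔ R.rel i y y := by
  have hiso := h ∅ Set.finite_empty (Set.ncard_empty _) (Set.notMem_empty x) (Set.notMem_empty y)
  rw [EqF, ← Set.singleton_def, ← Set.singleton_def] at hiso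
  exact rel_self_iff_of_iso_singleton hiso i

theorem EqM.iso_pair (h : EqM R 1 x y) {z : R.V} (hzx : z ≠ x) (hzy : z ≠ y) :
    Iso (R.restrict {x, z}) (R.restrict {y, z}) :=
  h {z} (Set.finite_singleton z) (Set.ncard_singleton z)
    (Set.notMem_singleton_iff.2 hzx.symm) (Set.notMem_singleton_iff.2 hzy.symm)

theorem EqM.iso_triple (h : EqM R 2 x y) {u v : R.V} (huv : u ≠ v) (hux : u ≠ x) (huy : u ≠ y)
    (hvx : v ≠ x) (hvy : v ≠ y) : Iso (R.restrict {x, u, v}) (R.restrict {y, u, v}) :=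
  h {u, v} (Set.toFinite _) (Set.ncard_pair huv) (by simp [hux.symm, hvx.symm])
    (by simp [huy.symm, hvy.symm])

theorem EqM.rel_self_iff_and_dEq_of_mem_Ioo (h : EqM R 1 x y) {z : R.V}
    (hz : z ∈ Set.Ioo x y) : (∀ i, R.rel i x x ↔ R.rel i z z) ∧ dEq R x z z y := by
  have hiso := h.iso_pair hz.1.ne' hz.2.ne
  rw [Set.pair_comm y z] at hiso
  exact rel_self_iff_and_dEq_of_iso_pair hz.1 hz.2 hiso

theorem EqM.dEq_of_notMem_Icc (h : EqM R 1 x y) (hxy : x ≤ y) {w : R.V}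
    (hw : w ∉ Set.Icc x y) : dEq R x w y w := by
  simp only [Set.mem_Icc, not_and_or, not_le] at hw
  rcases hw with hwx | hyw
  · have hwy := hwx.trans_le hxy
    have hiso := h.iso_pair hwx.ne hwy.ne
    rw [Set.pair_comm x w, Set.pair_comm y w] at hiso
    exact (rel_self_iff_and_dEq_of_iso_pair hwx hwy hiso).2.swap
  · have hxw := hxy.trans_lt hyw
    exact (rel_self_iff_and_dEq_of_iso_pair hxw hyw (h.iso_pair hxw.ne' hyw.ne')).2

theorem EqM.dEq_of_mem_Ioo_of_notMem_Icc (h : EqM R 2 x y) {u w : R.V}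
    (hu : u ∈ Set.Ioo x y) (hw : w ∉ Set.Icc x y) : dEq R u w x w := by
  simp only [Set.mem_Icc, not_and_or, not_le] at hw
  rcases hw with hwx | hyw
  · have hwu := hwx.trans hu.1
    have hiso := h.iso_triple hwu.ne' hu.1.ne' hu.2.ne hwx.ne (hwu.trans hu.2).ne
    rw [Set.pair_comm u w, Set.insert_comm x w, Set.insert_comm y w, Set.pair_comm y u] at hiso
    exact (dEq_of_iso_triple hwx hu.1 hwu hu.2 hiso).1.swap.symm
  · have huw := hu.2.trans hyw
    have hiso := h.iso_triple huw.ne hu.1.ne' hu.2.ne (hu.1.trans huw).ne' hyw.ne'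
    rw [Set.insert_comm y] at hiso
    exact (dEq_of_iso_triple hu.1 huw hu.2 hyw hiso).2.1.symm

theorem EqM.dEq_of_mem_Ioo_of_lt (h : EqM R 2 x y) {z z' : R.V} (hz : z ∈ Set.Ioo x y)
    (hz' : z' ∈ Set.Ioo x y) (hzz' : z < z') : dEq R x z z z' ∧ dEq R x z' z y := by
  have hiso := h.iso_triple hzz'.ne hz.1.ne' hz.2.ne hz'.1.ne' hz'.2.ne
  rw [Set.insert_comm y, Set.pair_comm y] at hiso
  obtain ⟨h₁, h₂, -⟩ := dEq_of_iso_triple hz.1 hzz' hzz' hz'.2 hiso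
  exact ⟨h₁, h₂⟩

theorem EqLe.rel_self_iff_of_mem_Icc (h : EqLe R 2 x y) {u : R.V} (hu : u ∈ Set.Icc x y)
    (i : ι) : R.rel i u u ↔ R.rel i x x := by
  rcases Set.eq_endpoints_or_mem_Ioo_of_mem_Icc hu with rfl | rfl | hu
  · rfl
  · exact ((h 0 (Nat.zero_le 2)).rel_self_iff i).symm
  · exact (((h 1 one_le_two).rel_self_iff_and_dEq_of_mem_Ioo hu).1 i).symm

theorem EqLe.intervalR_Icc (h : EqLe R 2 x y) (hxy : x ≤ y) : IntervalR R (Set.Icc x y) := by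
  have hout : ∀ u ∈ Set.Icc x y, ∀ w ∉ Set.Icc x y, dEq R u w x w := by
    intro u hu w hw
    rcases Set.eq_endpoints_or_mem_Ioo_of_mem_Icc hu with rfl | rfl | hu
    · exact dEq_rfl
    · exact ((h 1 one_le_two).dEq_of_notMem_Icc hxy hw).symm
    · exact (h 2 le_rfl).dEq_of_mem_Ioo_of_notMem_Icc hu hw
  exact ⟨fun u hu w hw z huz hzw => ⟨le_trans hu.1 huz, le_trans hzw hw.2⟩,
    fun u hu u' hu' w hw => (hout u hu w hw).trans (hout u' hu' w hw).symm⟩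

theorem EqLe.dEq_left_of_mem_Ioo (h : EqLe R 2 x y) {z z' : R.V} (hz : z ∈ Set.Ioo x y)
    (hz' : z' ∈ Set.Ioo x y) : dEq R x z x z' := by
  have key : ∀ {z z'}, z ∈ Set.Ioo x y → z' ∈ Set.Ioo x y → z < z' → dEq R x z x z' :=
    fun hz hz' hzz' => ((h 1 one_le_two).rel_self_iff_and_dEq_of_mem_Ioo hz).2.trans
      ((h 2 le_rfl).dEq_of_mem_Ioo_of_lt hz hz' hzz').2.symm
  rcases lt_trichotomy z z' with hzz' | rfl | hzz'
  · exact key hz hz' hzz'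
  · exact dEq_rfl
  · exact (key hz' hz hzz').symm

theorem EqLe.exists_dEq_of_mem_Icc (h : EqLe R 2 x y) {a b : R.V} (ha : a ∈ Set.Icc x y)
    (hb : b ∈ Set.Icc x y) (hab : a < b) (hne : {a, b} ≠ ({x, y} : Set R.V)) :
    ∃ z ∈ Set.Ioo x y, dEq R a b x z := by
  rcases ha.1.eq_or_lt with rfl | hxa
  · exact ⟨b, ⟨hab, hb.2.lt_of_ne fun hby => hne (hby ▸ rfl)⟩, dEq_rfl⟩
  have haI : a ∈ Set.Ioo x y := ⟨hxa, hab.trans_le hb.2⟩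
  refine ⟨a, haI, ?_⟩
  rcases hb.2.eq_or_lt with rfl | hby
  · exact ((h 1 one_le_two).rel_self_iff_and_dEq_of_mem_Ioo haI).2.symm
  · exact ((h 2 le_rfl).dEq_of_mem_Ioo_of_lt haI ⟨hxa.trans hab, hby⟩ hab).1.symm

theorem EqLe.dEq_of_mem_Icc (h : EqLe R 2 x y) :
    ∀ a ∈ Set.Icc x y, ∀ b ∈ Set.Icc x y, ∀ a' ∈ Set.Icc x y, ∀ b' ∈ Set.Icc x y,
      a < b → a' < b' → {a, b} ≠ ({x, y} : Set R.V) → {a', b'} ≠ ({x, y} : Set R.V) →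
      dEq R a b a' b' := by
  intro a ha b hb a' ha' b' hb' hab hab' hne hne'
  obtain ⟨z, hz, hdz⟩ := h.exists_dEq_of_mem_Icc ha hb hab hne
  obtain ⟨z', hz', hdz'⟩ := h.exists_dEq_of_mem_Icc ha' hb' hab' hne'
  exact hdz.trans ((h.dEq_left_of_mem_Ioo hz hz').trans hdz'.symm)

theorem eqR_of_intervalR (hxy : x < y) (hI : IntervalR R (Set.Icc x y))
    (hloop : ∀ u ∈ Set.Icc x y, ∀ v ∈ Set.Icc x y, ∀ i, R.rel i u u ↔ R.rel i v v)
    (hpair : ∀ a ∈ Set.Icc x y, ∀ b ∈ Set.Icc x y, ∀ a' ∈ Set.Icc x y, ∀ b' ∈ Set.Icc x y,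
      a < b → a' < b' → {a, b} ≠ ({x, y} : Set R.V) → {a', b'} ≠ ({x, y} : Set R.V) →
      dEq R a b a' b') :
    EqR R x y := by
  intro m F hF _ hxF hyF
  set C := F ∩ Set.Icc x y
  have hC : C.Finite := hF.inter_of_left _
  have hxC : x ∉ C := fun h => hxF h.1
  have hyC : y ∉ C := fun h => hyF h.1
  have hxyC : y ∉ insert x C := by simp [hxy.ne', hyC]
  have hyxC : x ∉ insert y C := by simp [hxy.ne, hxC]
  have hsplit : ∀ z, insert z F = insert z C ∪ F \ Set.Icc x y := fun z => by
    rw [Set.insert_union, Set.inter_union_sdiff]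
  have hxI : insert x C ⊆ Set.Icc x y :=
    Set.insert_subset (Set.left_mem_Icc.2 hxy.le) Set.inter_subset_right
  have hyI : insert y C ⊆ Set.Icc x y :=
    Set.insert_subset (Set.right_mem_Icc.2 hxy.le) Set.inter_subset_right
  rw [EqF, hsplit x, hsplit y]
  refine iso_union_of_intervalR hI hxI hyI Set.disjoint_sdiff_left ?_
  refine iso_restrict_of_dEq (hC.insert x) (hC.insert y)
    (by rw [Set.ncard_insert_of_notMem hxC hC, Set.ncard_insert_of_notMem hyC hC])
    (fun u hu v hv => hloop u (hxI hu) v (hyI hv))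
    fun a ha b hb a' ha' b' hb' hab hab' =>
      hpair a (hxI ha) b (hxI hb) a' (hyI ha') b' (hyI hb') hab hab' ?_ ?_
  · exact fun he => hxyC (Set.pair_subset ha hb (he ▸ Set.mem_insert_of_mem x rfl))
  · exact fun he => hyxC (Set.pair_subset ha' hb' (he ▸ Set.mem_insert x {y}))

end Equivalence

end OrdBin

/-- For `x < y` in an ordered binary structure `R`: `x ≃_{≤2,R} y` iff
`[x,y]` is an interval of `R`, the restriction of `R` to `[x,y]` is `1`-monomorphic,
and the substructures induced on any two `2`-element subsets of `[x,y]` distinct from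
`{x,y}` are isomorphic. -/
theorem le_two_equivalent_iff {ι : Type} (R : OrdBin ι) (x y : R.V)
    (hle : R.le x y) (hne : x ≠ y) :
    OrdBin.EqLe R 2 x y ↔
      (OrdBin.IntervalR R {z : R.V | R.le x z ∧ R.le z y} ∧
       OrdBin.NMono (R.restrict {z : R.V | R.le x z ∧ R.le z y}) 1 ∧
       ∀ A A' : Set R.V,
         A ⊆ {z : R.V | R.le x z ∧ R.le z y} → A' ⊆ {z : R.V | R.le x z ∧ R.le z y} →
         A.Finite → A'.Finite → A.ncard = 2 → A'.ncard = 2 →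
         A ≠ {x, y} → A' ≠ {x, y} →
         OrdBin.Iso (R.restrict A) (R.restrict A')) := by
  have hxy : x < y := lt_of_le_of_ne hle hne
  rw [OrdBin.nMono_one_restrict_iff]
  constructor
  · intro h
    have hloop : ∀ u ∈ Set.Icc x y, ∀ v ∈ Set.Icc x y, ∀ i, R.rel i u u ↔ R.rel i v v :=
      fun u hu v hv i =>
        (h.rel_self_iff_of_mem_Icc hu i).trans (h.rel_self_iff_of_mem_Icc hv i).symm
    exact ⟨h.intervalR_Icc hle, hloop, OrdBin.iso_pairs_of_dEq hloop h.dEq_of_mem_Icc⟩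
  · rintro ⟨hI, hloop, hpairs⟩ m -
    exact OrdBin.eqR_of_intervalR hxy hI hloop (OrdBin.dEq_of_iso_pairs hpairs) m
end

section
/- Let R = (V, ≤, (ρ_i)_{i∈I}) be an ordered binary structure and let x < x' < y < y' in V. If x ≃_{≤2,R} y and x' ≃_{≤2,R} y', then x ≃_{≤2,R} y'. -/
/-! For `x < y`, an isomorphism between the substructures on `insert x F` and `insert y F` must
preserve the order, so it is the map moving each point of `[x, y)` to the next point of
`insert y F` and fixing the other points; hence `x ≃_F y` says that this map preserves the
relations. For `|F| ≤ 2` this forces `[x, y]` to be uniform: its points carry the same loops, its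
pairs other than `(x, y)` the same relations, and each point outside sees all its points alike.
Conversely a uniform `[x, y]` gives `x ≃_F y` for every finite `F`. When `x < x' < y < y'`, the
uniform intervals `[x, y]` and `[x', y']` share the two points `x' < y`, which glues them into a
uniform interval `[x, y']`. -/

open Set

lemma exists_strictMonoOn_shift {α : Type*} [LinearOrder α] {x y : α} (hxy : x < y) {F : Set α}
    (hF : F.Finite) (hxF : x ∉ F) (hyF : y ∉ F) :
    ∃ σ : α → α, StrictMonoOn σ (insert x F) ∧ σ '' insert x F = insert y F ∧
      (∀ p ∉ Ico x y, σ p = p) ∧ ∀ p ∈ Ico x y, p < σ p ∧ σ p ≤ y := by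
  have hmin : ∀ p, p < y → ∃ q ∈ insert y F ∩ Ioi p, ∀ r ∈ insert y F ∩ Ioi p, q ≤ r :=
    fun p hp => exists_min_image _ id ((hF.insert y).inter_of_left _) ⟨y, mem_insert _ _, hp⟩
  choose! next hnext hnext_le using hmin
  classical
  let σ : α → α := fun p => if p ∈ Ico x y then next p else p
  have σ_in : ∀ p ∈ Ico x y, σ p = next p := fun p hp => if_pos hp
  have σ_out : ∀ p ∉ Ico x y, σ p = p := fun p hp => if_neg hp
  have σ_le_of_lt : ∀ p ∈ Ico x y, ∀ q ∈ insert x F, p < q → σ p ≤ q := fun p hp q hq hpq =>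
    σ_in p hp ▸ hnext_le p hp.2 q
      ⟨mem_insert_of_mem _ ((mem_insert_iff.1 hq).resolve_left (hp.1.trans_lt hpq).ne'), hpq⟩
  have σ_le_y : ∀ p ∈ Ico x y, σ p ≤ y := fun p hp => σ_in p hp ▸ hnext_le p hp.2 y
    ⟨mem_insert _ _, hp.2⟩
  have hmono : StrictMonoOn σ (insert x F) := by
    intro p hp q hq hpq
    have hqy : q ≠ y := fun h => hyF ((mem_insert_iff.1 (h ▸ hq)).resolve_left hxy.ne')
    by_cases hqI : q ∈ Ico x y
    · rw [σ_in q hqI]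
      refine lt_of_le_of_lt ?_ (hnext q hqI.2).2
      by_cases hpI : p ∈ Ico x y
      · exact σ_le_of_lt p hpI q hq hpq
      · exact (σ_out p hpI).symm ▸ hpq.le
    · rw [σ_out q hqI]
      by_cases hpI : p ∈ Ico x y
      · have hyq : y < q := lt_of_le_of_ne (not_lt.1 fun h => hqI ⟨hpI.1.trans hpq.le, h⟩)
          hqy.symm
        exact (σ_le_y p hpI).trans_lt hyq
      · exact (σ_out p hpI).symm ▸ hpq
  have hmaps : MapsTo σ (insert x F) (insert y F) := by
    intro p hp
    by_cases hpI : p ∈ Ico x y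
    · exact σ_in p hpI ▸ (hnext p hpI.2).1
    · rw [σ_out p hpI]
      have hpx : p ≠ x := by rintro rfl; exact hpI ⟨le_rfl, hxy⟩
      exact mem_insert_of_mem _ ((mem_insert_iff.1 hp).resolve_left hpx)
  refine ⟨σ, hmono, eq_of_subset_of_ncard_le hmaps.image_subset ?_ (hF.insert y), σ_out,
    fun p hp => ⟨σ_in p hp ▸ (hnext p hp.2).2, σ_le_y p hp⟩⟩
  rw [hmono.injOn.ncard_image, ncard_insert_of_notMem hxF hF, ncard_insert_of_notMem hyF hF]

namespace OrdBin

variable {ι : Type} {R : OrdBin ι}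

noncomputable instance inst_s14 (R : OrdBin ι) : LinearOrder R.V :=
  have := R.linear
  { le := R.le
    le_refl := refl_of R.le
    le_trans := fun _ _ _ => trans_of R.le
    le_antisymm := fun _ _ => antisymm_of R.le
    le_total := total_of R.le
    toDecidableLE := Classical.decRel _ }

/-- The paper's `d(a, b)`: `edge R a b = edge R c d` is `dEq R a b c d`, in a form one can rewrite
with. `edge R a a` records the loops at `a`. -/
def edge (R : OrdBin ι) (a b : R.V) : ι → Prop × Prop :=
  fun i => (R.rel i a b, R.rel i b a)

lemma edge_swap_eq {a b c d : R.V} (h : edge R a b = edge R c d) :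
    edge R b a = edge R d c :=
  funext fun i => congrArg Prod.swap (congrFun h i)

lemma rel_iff_of_edge_eq {a b c d : R.V} (h : edge R a b = edge R c d) (i : ι) :
    R.rel i a b ↔ R.rel i c d :=
  Iff.of_eq (congrArg Prod.fst (congrFun h i))

lemma edge_eq_of_iso {A B : Set R.V} (h : Iso (R.restrict A) (R.restrict B)) {n : ℕ}
    {a b : Fin n → R.V} (ha : StrictMono a) (hb : StrictMono b)
    (hA : range a = A) (hB : range b = B) (i j : Fin n) :
    edge R (a i) (a j) = edge R (b i) (b j) := by
  subst hA hB
  obtain ⟨e, hle, hrel⟩ := h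
  let g : Fin n → R.V := fun k => (e ⟨a k, mem_range_self k⟩).1
  have hg : StrictMono g := by
    intro k l hkl
    refine lt_of_le_of_ne ((hle _ _).1 (ha hkl).le) fun heq => (ha hkl).ne ?_
    exact congrArg Subtype.val (e.injective (Subtype.ext heq))
  have hrange : range g = range b := by
    refine Subset.antisymm (range_subset_iff.2 fun k => (e _).2) fun c hc => ?_
    obtain ⟨k, hk⟩ := (e.symm ⟨c, hc⟩).2
    have hk' : (⟨a k, mem_range_self k⟩ : (R.restrict (range a)).V) = e.symm ⟨c, hc⟩ :=
      Subtype.ext hk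
    exact ⟨k, by simp only [g, hk']; exact congrArg Subtype.val (e.apply_symm_apply _)⟩
  have hrel' : ∀ k l m, R.rel m (a k) (a l) ↔ R.rel m (g k) (g l) :=
    fun k l m => hrel m ⟨a k, mem_range_self k⟩ ⟨a l, mem_range_self l⟩
  rw [(hg.range_inj hb).1 hrange] at hrel'
  exact funext fun m => Prod.ext (propext (hrel' i j m)) (propext (hrel' j i m))

lemma iso_of_strictMonoOn {A B : Set R.V} {σ : R.V → R.V} (hσ : StrictMonoOn σ A)
    (hAB : σ '' A = B) (hedge : ∀ p ∈ A, ∀ q ∈ A, edge R (σ p) (σ q) = edge R p q) :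
    Iso (R.restrict A) (R.restrict B) := by
  refine ⟨(hAB ▸ hσ.injOn.bijOn_image).equiv σ, fun p q => ?_, fun i p q => ?_⟩
  · exact (hσ.le_iff_le p.2 q.2).symm
  · exact (rel_iff_of_edge_eq (hedge p.1 p.2 q.1 q.2) i).symm

def innerPairs {α : Type*} [Preorder α] (x y : α) : Set (α × α) :=
  {p | x ≤ p.1 ∧ p.1 < p.2 ∧ p.2 ≤ y ∧ (x < p.1 ∨ p.2 < y)}

/-- For `x < y` this is equivalent to `x ≃_{≤2,R} y`: see `uniformInterval_of_eqLe` and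
`UniformInterval.eqR`. -/
structure UniformInterval (R : OrdBin ι) (x y : R.V) : Prop where
  loop : ∀ a ∈ Icc x y, edge R a a = edge R x x
  inner : ∀ p ∈ innerPairs x y, ∀ q ∈ innerPairs x y, edge R p.1 p.2 = edge R q.1 q.2
  left : ∀ w < x, ∀ a ∈ Icc x y, edge R w a = edge R w x
  right : ∀ w, y < w → ∀ a ∈ Icc x y, edge R a w = edge R x w

namespace UniformInterval

variable {x y : R.V}

lemma edge_map_eq (G : UniformInterval R x y) {A : Set R.V} (hyA : y ∉ A)
    {σ : R.V → R.V} (hσ : StrictMonoOn σ A) (hout : ∀ p ∉ Ico x y, σ p = p)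
    (hin : ∀ p ∈ Ico x y, p < σ p ∧ σ p ≤ y) :
    ∀ p ∈ A, ∀ q ∈ A, edge R (σ p) (σ q) = edge R p q := by
  have hσIcc : ∀ r ∈ Ico x y, σ r ∈ Icc x y := fun r hr =>
    ⟨hr.1.trans (hin r hr).1.le, (hin r hr).2⟩
  have key : ∀ p ∈ A, ∀ q ∈ A, p ≤ q → edge R (σ p) (σ q) = edge R p q := by
    intro p hp q hq hpq
    by_cases hpI : p ∈ Ico x y <;> by_cases hqI : q ∈ Ico x y
    · rcases hpq.lt_or_eq with hpq | rfl
      · exact G.inner (σ p, σ q) ⟨(hσIcc p hpI).1, hσ hp hq hpq, (hσIcc q hqI).2,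
          Or.inl (hpI.1.trans_lt (hin p hpI).1)⟩ (p, q) ⟨hpI.1, hpq, hqI.2.le, Or.inr hqI.2⟩
      · rw [G.loop _ (hσIcc p hpI), G.loop p (Ico_subset_Icc_self hpI)]
    · have hyq : y < q := lt_of_le_of_ne (not_lt.1 fun h => hqI ⟨hpI.1.trans hpq, h⟩)
        fun h => hyA (h ▸ hq)
      rw [hout q hqI, G.right q hyq _ (hσIcc p hpI), G.right q hyq p (Ico_subset_Icc_self hpI)]
    · have hpx : p < x := not_le.1 fun h => hpI ⟨h, hpq.trans_lt hqI.2⟩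
      rw [hout p hpI, G.left p hpx _ (hσIcc q hqI), G.left p hpx q (Ico_subset_Icc_self hqI)]
    · rw [hout p hpI, hout q hqI]
  intro p hp q hq
  rcases le_total p q with hpq | hqp
  · exact key p hp q hq hpq
  · exact edge_swap_eq (key q hq p hp hqp)

lemma eqR (hxy : x < y) (G : UniformInterval R x y) : EqR R x y := by
  intro m F hF _ hxF hyF
  obtain ⟨σ, hσ, himage, hout, hin⟩ := exists_strictMonoOn_shift hxy hF hxF hyF
  exact iso_of_strictMonoOn hσ himage
    (G.edge_map_eq (fun h => (mem_insert_iff.1 h).elim hxy.ne' hyF) hσ hout hin)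

lemma union {x' y' : R.V} (G : UniformInterval R x y) (G' : UniformInterval R x' y')
    (hxx' : x < x') (hx'y : x' < y) (hyy' : y < y') : UniformInterval R x y' where
  loop a ha := by
    rcases le_or_gt a y with hay | hya
    · exact G.loop a ⟨ha.1, hay⟩
    · rw [G'.loop a ⟨(hx'y.trans hya).le, ha.2⟩, G.loop x' ⟨hxx'.le, hx'y.le⟩]
  inner := by
    suffices key : ∀ p ∈ innerPairs x y', edge R p.1 p.2 = edge R x' y from
      fun p hp q hq => (key p hp).trans (key q hq).symm
    have ref : (x', y) ∈ innerPairs x y := ⟨hxx'.le, hx'y, le_rfl, Or.inl hxx'⟩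
    have ref' : (x', y) ∈ innerPairs x' y' := ⟨le_rfl, hx'y, hyy'.le, Or.inr hyy'⟩
    rintro ⟨a, b⟩ ⟨hxa, hab, hby', -⟩
    dsimp only at hxa hab hby' ⊢
    rcases lt_or_ge b x' with hbx' | hx'b
    · exact G.inner (a, b) ⟨hxa, hab, (hbx'.trans hx'y).le, Or.inr (hbx'.trans hx'y)⟩ _ ref
    rcases lt_or_ge a x' with hax' | hx'a
    · rw [G'.left a hax' b ⟨hx'b, hby'⟩]
      exact G.inner (a, x') ⟨hxa, hax', hx'y.le, Or.inr hx'y⟩ _ ref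
    rcases hx'a.lt_or_eq with hx'a | rfl
    · exact G'.inner (a, b) ⟨hx'a.le, hab, hby', Or.inl hx'a⟩ _ ref'
    rcases hby'.lt_or_eq with hby' | hby'
    · exact G'.inner (x', b) ⟨le_rfl, hab, hby'.le, Or.inr hby'⟩ _ ref'
    -- `(x', y')` is inner to neither interval: compare it with `(y, y')` through `y' > y`
    rw [hby', G.right y' hyy' x' ⟨hxx'.le, hx'y.le⟩,
      ← G.right y' hyy' y ⟨(hxx'.trans hx'y).le, le_rfl⟩]
    exact G'.inner (y, y') ⟨hx'y.le, hyy', le_rfl, Or.inl hx'y⟩ _ ref'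
  left w hw a ha := by
    rcases le_or_gt a y with hay | hya
    · exact G.left w hw a ⟨ha.1, hay⟩
    · rw [G'.left w (hw.trans hxx') a ⟨(hx'y.trans hya).le, ha.2⟩,
        G.left w hw x' ⟨hxx'.le, hx'y.le⟩]
  right w hw a ha := by
    rcases lt_or_ge a x' with hax' | hx'a
    · exact G.right w (hyy'.trans hw) a ⟨ha.1, (hax'.trans hx'y).le⟩
    · rw [G'.right w hw a ⟨hx'a, ha.2⟩, G.right w (hyy'.trans hw) x' ⟨hxx'.le, hx'y.le⟩]

end UniformInterval

namespace EqLe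

variable {x y : R.V}

lemma edge_eq {m n : ℕ} (h : EqLe R m x y) {F : Set R.V} (hFin : F.Finite) (hF : F.ncard ≤ m)
    (hxF : x ∉ F) (hyF : y ∉ F) {a b : Fin n → R.V} (ha : StrictMono a) (hb : StrictMono b)
    (hA : range a = insert x F) (hB : range b = insert y F) (i j : Fin n) :
    edge R (a i) (a j) = edge R (b i) (b j) :=
  edge_eq_of_iso (h _ hF F hFin rfl hxF hyF) ha hb hA hB i j

lemma edge_mid_eq (h : EqLe R 2 x y) {u : R.V} (hu : u ∈ Ioo x y) :
    edge R x x = edge R u u ∧ edge R x u = edge R u y := by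
  have H := h.edge_eq (finite_singleton u) (by simp) (by simp [hu.1.ne]) (by simp [hu.2.ne'])
    (a := ![x, u]) (b := ![u, y]) (by simp [hu.1]) (by simp [hu.2])
    (by ext; simp; tauto) (by ext; simp)
  exact ⟨H 0 0, H 0 1⟩

lemma edge_mid_pair_eq (h : EqLe R 2 x y) {u v : R.V} (hxu : x < u) (huv : u < v) (hvy : v < y) :
    edge R x u = edge R u v ∧ edge R x v = edge R u y := by
  have H := h.edge_eq (toFinite {u, v}) (ncard_pair huv.ne).le
    (by simp [hxu.ne, (hxu.trans huv).ne]) (by simp [(huv.trans hvy).ne', hvy.ne'])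
    (a := ![x, u, v]) (b := ![u, v, y]) (by simp [hxu, huv]) (by simp [huv, hvy])
    (by ext; simp; tauto) (by ext; simp; tauto)
  exact ⟨H 0 1, H 0 2⟩

lemma edge_self_eq (h : EqLe R 2 x y) {a : R.V} (ha : a ∈ Icc x y) : edge R a a = edge R x x := by
  rcases ha.1.eq_or_lt with rfl | hxa
  · rfl
  rcases ha.2.eq_or_lt with rfl | hay
  · exact (h.edge_eq finite_empty (by simp) (notMem_empty x) (notMem_empty a)
      (a := ![x]) (b := ![a]) (by simp) (by simp) (by simp) (by simp) 0 0).symm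
  · exact (h.edge_mid_eq ⟨hxa, hay⟩).1.symm

lemma edge_left_eq (h : EqLe R 2 x y) (hxy : x < y) {w : R.V} (hw : w < x) {a : R.V}
    (ha : a ∈ Icc x y) : edge R w a = edge R w x := by
  rcases ha.1.eq_or_lt with rfl | hxa
  · rfl
  rcases ha.2.eq_or_lt with rfl | hay
  · have H := h.edge_eq (finite_singleton w) (by simp) (by simp [hw.ne'])
      (by simp [(hw.trans hxa).ne'])
      (a := ![w, x]) (b := ![w, a]) (by simp [hw]) (by simp [hw.trans hxa])
      (by ext; simp) (by ext; simp)
    exact (H 0 1).symm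
  · have H := h.edge_eq (toFinite {w, a}) (ncard_pair (hw.trans hxa).ne).le
      (by simp [hw.ne', hxa.ne]) (by simp [(hw.trans hxy).ne', hay.ne'])
      (a := ![w, x, a]) (b := ![w, a, y]) (by simp [hw, hxa]) (by simp [hw.trans hxa, hay])
      (by ext; simp; tauto) (by ext; simp; tauto)
    exact (H 0 1).symm

lemma edge_right_eq (h : EqLe R 2 x y) (hxy : x < y) {w : R.V} (hw : y < w) {a : R.V}
    (ha : a ∈ Icc x y) : edge R a w = edge R x w := by
  rcases ha.1.eq_or_lt with rfl | hxa
  · rfl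
  rcases ha.2.eq_or_lt with rfl | hay
  · have H := h.edge_eq (finite_singleton w) (by simp) (by simp [(hxa.trans hw).ne])
      (by simp [hw.ne])
      (a := ![x, w]) (b := ![a, w]) (by simp [hxa.trans hw]) (by simp [hw])
      (by ext; simp; tauto) (by ext; simp; tauto)
    exact (H 0 1).symm
  · have H := h.edge_eq (toFinite {a, w}) (ncard_pair (hay.trans hw).ne).le
      (by simp [hxa.ne, (hxy.trans hw).ne]) (by simp [hay.ne', hw.ne])
      (a := ![x, a, w]) (b := ![a, y, w]) (by simp [hxa, hay.trans hw]) (by simp [hay, hw])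
      (by ext; simp; tauto) (by ext; simp; tauto)
    exact (H 0 2).symm

end EqLe

lemma uniformInterval_of_eqLe {x y : R.V} (hxy : x < y) (h : EqLe R 2 x y) :
    UniformInterval R x y where
  loop _ := h.edge_self_eq
  inner := by
    have hconst : ∀ u ∈ Ioo x y, ∀ v ∈ Ioo x y, u < v → edge R x u = edge R x v :=
      fun u hu v hv huv => (h.edge_mid_eq hu).2.trans (h.edge_mid_pair_eq hu.1 huv hv.2).2.symm
    have hbase : ∀ p ∈ innerPairs x y, ∃ c ∈ Ioo x y, edge R p.1 p.2 = edge R x c := by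
      rintro ⟨a, b⟩ ⟨hxa, hab, hby, hend⟩
      dsimp only at hxa hab hby hend ⊢
      rcases hxa.eq_or_lt with rfl | hxa
      · exact ⟨b, ⟨hab, hend.resolve_left (lt_irrefl _)⟩, rfl⟩
      rcases hby.eq_or_lt with rfl | hby
      · exact ⟨a, ⟨hxa, hab⟩, (h.edge_mid_eq ⟨hxa, hab⟩).2.symm⟩
      · exact ⟨a, ⟨hxa, hab.trans hby⟩, (h.edge_mid_pair_eq hxa hab hby).1.symm⟩
    intro p hp q hq
    obtain ⟨c, hc, hpc⟩ := hbase p hp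
    obtain ⟨d, hd, hqd⟩ := hbase q hq
    rw [hpc, hqd]
    rcases lt_trichotomy c d with hcd | rfl | hdc
    · exact hconst c hc d hd hcd
    · rfl
    · exact (hconst d hd c hc hdc).symm
  left _ hw _ := h.edge_left_eq hxy hw
  right _ hw _ := h.edge_right_eq hxy hw

end OrdBin

/-- If `x < x' < y < y'` in an ordered binary structure `R`, `x ≃_{≤2,R} y`
and `x' ≃_{≤2,R} y'`, then `x ≃_{≤2,R} y'`. -/
theorem sandwich {ι : Type} (R : OrdBin ι) (x x' y y' : R.V)
    (h1 : R.le x x') (h1' : x ≠ x') (h2 : R.le x' y) (h2' : x' ≠ y)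
    (h3 : R.le y y') (h3' : y ≠ y')
    (hxy : OrdBin.EqLe R 2 x y) (hx'y' : OrdBin.EqLe R 2 x' y') :
    OrdBin.EqLe R 2 x y' := by
  have hxx' : x < x' := lt_of_le_of_ne h1 h1'
  have hx'y : x' < y := lt_of_le_of_ne h2 h2'
  have hyy' : y < y' := lt_of_le_of_ne h3 h3'
  have G := OrdBin.uniformInterval_of_eqLe (hxx'.trans hx'y) hxy
  have G' := OrdBin.uniformInterval_of_eqLe (hx'y.trans hyy') hx'y'
  exact fun m _ => (G.union G' hxx' hx'y hyy').eqR ((hxx'.trans hx'y).trans hyy') m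
end
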